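/- If $A$ is symmetric positive definite and $B^T$ is injective, then the saddle-point matrix $K = \begin{pmatrix} A & B^T \\ B & 0 \end{pmatrix}$ is invertible. -/

import Mathlib

open Matrix

theorem saddle_point_matrix_invertible
    {n m : ℕ} (A : Matrix (Fin n) (Fin n) ℝ) (B : Matrix (Fin m) (Fin n) ℝ)
    (hA : A.PosDef) (hB : Function.Injective (Bᵀ.mulVec)) :
    IsUnit (Matrix.fromBlocks A Bᵀ B 0) := by
  rw [← Matrix.mulVec_injective_iff_isUnit]
  have key : ∀ v : (Fin n ⊕ Fin m) → ℝ,
      (Matrix.fromBlocks A Bᵀ B 0).mulVec v = 0 → v = 0 := by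
    intro v hv
    set x : Fin n → ℝ := v ∘ Sum.inl
    set y : Fin m → ℝ := v ∘ Sum.inr
    have hvelim : v = Sum.elim x y := by
      funext i; cases i <;> rfl
    rw [hvelim, Matrix.fromBlocks_mulVec] at hv
    have h1 : A *ᵥ x + Bᵀ *ᵥ y = 0 := by
      funext i; exact congrFun hv (Sum.inl i)
    have h2 : B *ᵥ x = 0 := by
      funext i
      have := congrFun hv (Sum.inr i)
      simpa using this
    have hx : x = 0 := by
      by_contra hx0
      have hpos := hA.dotProduct_mulVec_pos hx0
      have : x ⬝ᵥ (A *ᵥ x) = - (x ⬝ᵥ (Bᵀ *ᵥ y)) := by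
        have := congrArg (fun w => x ⬝ᵥ w) h1
        simp [dotProduct_add] at this
        linarith [this]
      have hz : x ⬝ᵥ (Bᵀ *ᵥ y) = 0 := by
        rw [Matrix.dotProduct_mulVec, Matrix.vecMul_transpose, h2]
        simp
      rw [hz, neg_zero] at this
      have hpos' : 0 < x ⬝ᵥ (A *ᵥ x) := by simpa using hpos
      linarith
    have hy : y = 0 := by
      apply hB
      rw [Matrix.mulVec_zero]
      have := h1
      rw [hx, Matrix.mulVec_zero, zero_add] at this
      exact this
    rw [hvelim, hx, hy]
    funext i; cases i <;> rfl
  intro u w huw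
  have : (Matrix.fromBlocks A Bᵀ B 0).mulVec (u - w) = 0 := by
    rw [Matrix.mulVec_sub, huw, sub_self]
  have := key _ this
  exact sub_eq_zero.mp this
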